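/- arXiv:1810.06064 — 2 statements merged into one kernel-verified Lean document; each statement's English description precedes it below -/
import Mathlib

section
/- Let σ, R > 0, let ν, q : ℝ^d → ℝ be smooth, let c ∈ ℝ, and suppose v∞ : ℝ^d → ℝ is C² and satisfies the stationary HJB equation q − c − |∇v∞|²/(2R) − ∇v∞·∇ν + (σ²/2)Δv∞ = 0 pointwise. Then the function f∞(x) := exp(−(v∞(x) + R ν(x))/(σ²R)) satisfies the eigenvalue equation (H f∞)(x) = (c/(σ²R)) f∞(x) for all x ∈ ℝ^d, where (He)(x) := (V(x)/(σ²R)) e(x) − (σ²/2) Δe(x) and V(x) := q(x) + (R/2)|∇ν(x)|² − (σ²R/2)Δν(x). -/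
open MeasureTheory
open scoped BigOperators RealInnerProductSpace

/-- Divergence of a vector field on `ℝ^d`. -/
noncomputable def vdiv {d : ℕ} (X : EuclideanSpace ℝ (Fin d) → EuclideanSpace ℝ (Fin d))
    (x : EuclideanSpace ℝ (Fin d)) : ℝ :=
  ∑ i, fderiv ℝ X x (EuclideanSpace.single i 1) i

/-- Laplacian of a scalar field on `ℝ^d`, as the divergence of the gradient. -/
noncomputable def lap {d : ℕ} (f : EuclideanSpace ℝ (Fin d) → ℝ)
    (x : EuclideanSpace ℝ (Fin d)) : ℝ :=
  vdiv (gradient f) x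

section Helpers

open InnerProductSpace

variable {d : ℕ}
local notation "E" => EuclideanSpace ℝ (Fin d)

lemma hasGradientAt_combo {f h : E → ℝ} {u v x : E} (a b : ℝ)
    (hf : HasGradientAt f u x) (hh : HasGradientAt h v x) :
    HasGradientAt (fun y => a * f y + b * h y) (a • u + b • v) x := by
  rw [hasGradientAt_iff_hasFDerivAt] at *
  have := (hf.const_mul a).add (hh.const_mul b)
  simp only [map_add, map_smulₛₗ, starRingEnd_apply, star_trivial]
  exact this

lemma hasGradientAt_exp {g : E → ℝ} {u x : E} (hg : HasGradientAt g u x) :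
    HasGradientAt (fun y => Real.exp (g y)) (Real.exp (g x) • u) x := by
  rw [hasGradientAt_iff_hasFDerivAt] at *
  have := hg.exp
  simp only [map_smulₛₗ, starRingEnd_apply, star_trivial]
  exact this

lemma fderiv_apply_single {f : E → ℝ} {u x : E} (hf : HasGradientAt f u x) (i : Fin d) :
    fderiv ℝ f x (EuclideanSpace.single i 1) = u i := by
  rw [hasGradientAt_iff_hasFDerivAt] at hf
  rw [hf.fderiv]
  simp [toDual_apply_apply, EuclideanSpace.inner_single_right]

lemma norm_sq_eq_sum' (v : E) : ‖v‖ ^ 2 = ∑ i, v i * v i := by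
  rw [← real_inner_self_eq_norm_sq]
  simp only [PiLp.inner_apply, RCLike.inner_apply, conj_trivial]

lemma differentiable_gradient {f : E → ℝ} (hf : ContDiff ℝ 2 f) :
    Differentiable ℝ (gradient f) := by
  have h1 : ContDiff ℝ 1 (fderiv ℝ f) := hf.fderiv_right (by norm_num)
  have h2 : gradient f = fun y => ∑ i, (fderiv ℝ f y (EuclideanSpace.single i 1)) •
      (EuclideanSpace.single i 1 : E) := by
    funext y
    have hd : DifferentiableAt ℝ f y := (hf.differentiable (by norm_num)) y
    have hg := hd.hasGradientAt
    ext j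
    rw [← fderiv_apply_single hg j]
    rw [WithLp.ofLp_sum, Finset.sum_apply]
    simp [EuclideanSpace.single_apply]
  rw [h2]
  apply Differentiable.fun_sum
  intro i _
  exact ((h1.differentiable one_ne_zero).clm_apply (differentiable_const _)).smul_const _

lemma lap_exp (g : E → ℝ) (x : E) (hdg : Differentiable ℝ g)
    (hG : Differentiable ℝ (gradient g)) :
    lap (fun y => Real.exp (g y)) x
      = Real.exp (g x) * (lap g x + ‖gradient g x‖ ^ 2) := by
  have hgrad : ∀ y, gradient (fun z => Real.exp (g z)) y = Real.exp (g y) • gradient g y :=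
    fun y => (hasGradientAt_exp ((hdg y).hasGradientAt)).gradient
  have hfun : gradient (fun z => Real.exp (g z)) = fun y => Real.exp (g y) • gradient g y :=
    funext hgrad
  have hDc : DifferentiableAt ℝ (fun y => Real.exp (g y)) x := (hdg x).exp
  have hD : fderiv ℝ (fun y => Real.exp (g y) • gradient g y) x
      = Real.exp (g x) • fderiv ℝ (gradient g) x
        + (fderiv ℝ (fun y => Real.exp (g y)) x).smulRight (gradient g x) :=
    fderiv_smul hDc (hG x)
  have hL : ∀ i, fderiv ℝ (fun y => Real.exp (g y)) x (EuclideanSpace.single i 1)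
      = Real.exp (g x) * gradient g x i := by
    intro i
    have := fderiv_apply_single (hasGradientAt_exp ((hdg x).hasGradientAt)) i
    simpa using this
  unfold lap vdiv
  rw [hfun]
  simp only [hD, ContinuousLinearMap.add_apply, ContinuousLinearMap.smul_apply,
    ContinuousLinearMap.smulRight_apply, PiLp.add_apply, PiLp.smul_apply, smul_eq_mul, hL]
  rw [Finset.sum_add_distrib, norm_sq_eq_sum' (gradient g x), mul_add,
    Finset.mul_sum, Finset.mul_sum]
  congr 1
  exact Finset.sum_congr rfl fun i _ => by ring

lemma lap_combo (a b : ℝ) (f h : E → ℝ) (x : E) (hdf : Differentiable ℝ f)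
    (hdh : Differentiable ℝ h) (hGf : Differentiable ℝ (gradient f))
    (hGh : Differentiable ℝ (gradient h)) :
    lap (fun y => a * f y + b * h y) x = a * lap f x + b * lap h x := by
  have hgrad : gradient (fun y => a * f y + b * h y)
      = fun y => a • gradient f y + b • gradient h y := by
    funext y
    exact (hasGradientAt_combo a b ((hdf y).hasGradientAt) ((hdh y).hasGradientAt)).gradient
  have hD : fderiv ℝ (fun y => a • gradient f y + b • gradient h y) x
      = a • fderiv ℝ (gradient f) x + b • fderiv ℝ (gradient h) x := by
    rw [fderiv_fun_add (f := fun y => a • gradient f y) (g := fun y => b • gradient h y)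
        ((hGf x).const_smul a) ((hGh x).const_smul b),
      fderiv_fun_const_smul (hGf x), fderiv_fun_const_smul (hGh x)]
  unfold lap vdiv
  rw [hgrad]
  simp only [hD, ContinuousLinearMap.add_apply, ContinuousLinearMap.smul_apply,
    PiLp.add_apply, PiLp.smul_apply, smul_eq_mul]
  rw [Finset.sum_add_distrib, Finset.mul_sum, Finset.mul_sum]

end Helpers

/-- If `v∞` solves the stationary HJB equation, then `f∞ = exp(−(v∞ + Rν)/(σ²R))` is an
eigenfunction of the Schrödinger operator `H e = (V/(σ²R))e − (σ²/2)Δe` with eigenvalue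
`c/(σ²R)`, where `V = q + (R/2)|∇ν|² − (σ²R/2)Δν`. -/
theorem stationary_f_is_eigenfunction
    (d : ℕ) (σ R : ℝ) (hσ : 0 < σ) (hR : 0 < R)
    (ν q : EuclideanSpace ℝ (Fin d) → ℝ) (hν : ContDiff ℝ (⊤ : ℕ∞) ν) (hq : ContDiff ℝ (⊤ : ℕ∞) q)
    (c : ℝ) (vinf : EuclideanSpace ℝ (Fin d) → ℝ) (hvinf : ContDiff ℝ 2 vinf)
    (hHJB : ∀ x,
      q x - c - ‖gradient vinf x‖ ^ 2 / (2 * R)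
        - ⟪gradient vinf x, gradient ν x⟫ + σ ^ 2 / 2 * lap vinf x = 0)
    (V : EuclideanSpace ℝ (Fin d) → ℝ)
    (hV : ∀ x, V x = q x + R / 2 * ‖gradient ν x‖ ^ 2 - σ ^ 2 * R / 2 * lap ν x)
    (finf : EuclideanSpace ℝ (Fin d) → ℝ)
    (hf : ∀ x, finf x = Real.exp (-(vinf x + R * ν x) / (σ ^ 2 * R))) :
    ∀ x, V x / (σ ^ 2 * R) * finf x - σ ^ 2 / 2 * lap finf x = c / (σ ^ 2 * R) * finf x := by
  intro x
  have hσ' : (σ : ℝ) ≠ 0 := ne_of_gt hσ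
  have hR' : (R : ℝ) ≠ 0 := ne_of_gt hR
  set a : ℝ := -(1 / (σ ^ 2 * R)) with ha
  set b : ℝ := -(1 / σ ^ 2) with hb
  set g : EuclideanSpace ℝ (Fin d) → ℝ := fun y => a * vinf y + b * ν y with hg
  have hν2 : ContDiff ℝ 2 ν := hν.of_le (WithTop.coe_le_coe.mpr (le_top : (2 : ℕ∞) ≤ ⊤))
  have hdν : Differentiable ℝ ν := hν2.differentiable (by norm_num)
  have hdv : Differentiable ℝ vinf := hvinf.differentiable (by norm_num)
  have hGv : Differentiable ℝ (gradient vinf) := differentiable_gradient hvinf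
  have hGν : Differentiable ℝ (gradient ν) := differentiable_gradient hν2
  have hfg : finf = fun y => Real.exp (g y) := by
    funext y
    rw [hf y, hg]
    congr 1
    have : -(vinf y + R * ν y) / (σ ^ 2 * R) = a * vinf y + b * ν y := by
      rw [ha, hb]
      field_simp
      ring
    exact this
  have hdg : Differentiable ℝ g := (hdv.const_mul a).add (hdν.const_mul b)
  have hgradg : ∀ y, gradient g y = a • gradient vinf y + b • gradient ν y := fun y =>
    (hasGradientAt_combo a b ((hdv y).hasGradientAt) ((hdν y).hasGradientAt)).gradient
  have hGg : Differentiable ℝ (gradient g) := by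
    rw [funext hgradg]
    exact (hGv.const_smul a).add (hGν.const_smul b)
  have hlapg : lap g x = a * lap vinf x + b * lap ν x :=
    lap_combo a b vinf ν x hdv hdν hGv hGν
  have hlapf : lap finf x = Real.exp (g x) * (lap g x + ‖gradient g x‖ ^ 2) := by
    rw [hfg]; exact lap_exp g x hdg hGg
  have hns : ‖gradient g x‖ ^ 2
      = a ^ 2 * ‖gradient vinf x‖ ^ 2
        + 2 * a * b * ⟪gradient vinf x, gradient ν x⟫
        + b ^ 2 * ‖gradient ν x‖ ^ 2 := by
    rw [hgradg x, ← real_inner_self_eq_norm_sq, ← real_inner_self_eq_norm_sq,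
      ← real_inner_self_eq_norm_sq]
    simp only [inner_add_left, inner_add_right, real_inner_smul_left, real_inner_smul_right,
      real_inner_comm (gradient ν x) (gradient vinf x)]
    ring
  have hE : finf x = Real.exp (g x) := by rw [hfg]
  have hHx := hHJB x
  rw [hV x, hE, hlapf, hlapg, hns, ha, hb]
  set A := ‖gradient vinf x‖ ^ 2 with hA
  set B : ℝ := ⟪gradient vinf x, gradient ν x⟫ with hB
  set C := ‖gradient ν x‖ ^ 2 with hC
  set Lv := lap vinf x with hLv
  set Lν := lap ν x with hLν
  have hq' : q x = c + A / (2 * R) + B - σ ^ 2 / 2 * Lv := by linarith [hHx]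
  rw [hq']
  field_simp
  ring
end

section
/- Let σ, R > 0, let ν, q : ℝ^d → ℝ be smooth, let c ∈ ℝ. Suppose v∞, p∞ : ℝ^d → ℝ are C², v∞ satisfies the stationary HJB equation q − c − |∇v∞|²/(2R) − ∇v∞·∇ν + (σ²/2)Δv∞ = 0 pointwise, and p∞ satisfies the stationary Fokker–Planck equation ∇·((∇ν + ∇v∞/R) p∞) + (σ²/2) Δp∞ = 0 pointwise. Define f∞(x) := exp(−(v∞(x) + R ν(x))/(σ²R)) and g∞(x) := p∞(x)/f∞(x). Then g∞ satisfies the eigenvalue equation (H g∞)(x) = (c/(σ²R)) g∞(x) for all x ∈ ℝ^d, where (He)(x) := (V(x)/(σ²R)) e(x) − (σ²/2) Δe(x) and V(x) := q(x) + (R/2)|∇ν(x)|² − (σ²R/2)Δν(x). -/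
open MeasureTheory
open scoped BigOperators RealInnerProductSpace

variable {d : ℕ}

lemma grad_inner (f : EuclideanSpace ℝ (Fin d) → ℝ) (x v : EuclideanSpace ℝ (Fin d)) :
    ⟪gradient f x, v⟫ = fderiv ℝ f x v := by
  simp [gradient, InnerProductSpace.toDual_symm_apply]

lemma gradient_coord (f : EuclideanSpace ℝ (Fin d) → ℝ) (x : EuclideanSpace ℝ (Fin d))
    (i : Fin d) : gradient f x i = fderiv ℝ f x (EuclideanSpace.single i 1) := by
  rw [← grad_inner f x (EuclideanSpace.single i 1)]
  rw [EuclideanSpace.inner_single_right]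
  simp

lemma inner_eq_sum (a b : EuclideanSpace ℝ (Fin d)) : ⟪a, b⟫ = ∑ i, a i * b i := by
  simp [PiLp.inner_apply]
  exact Finset.sum_congr rfl fun i _ => mul_comm _ _

lemma gradient_comb (a b : ℝ) (f g : EuclideanSpace ℝ (Fin d) → ℝ)
    (x : EuclideanSpace ℝ (Fin d)) (hf : DifferentiableAt ℝ f x)
    (hg : DifferentiableAt ℝ g x) :
    gradient (fun y => a * f y + b * g y) x = a • gradient f x + b • gradient g x := by
  ext i
  rw [PiLp.add_apply, PiLp.smul_apply, PiLp.smul_apply, gradient_coord, gradient_coord,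
    gradient_coord]
  rw [fderiv_fun_add ((hf.const_mul a)) ((hg.const_mul b)), fderiv_const_mul hf a,
    fderiv_const_mul hg b]
  simp

lemma gradient_mul (f g : EuclideanSpace ℝ (Fin d) → ℝ)
    (x : EuclideanSpace ℝ (Fin d)) (hf : DifferentiableAt ℝ f x)
    (hg : DifferentiableAt ℝ g x) :
    gradient (fun y => f y * g y) x = f x • gradient g x + g x • gradient f x := by
  ext i
  rw [PiLp.add_apply, PiLp.smul_apply, PiLp.smul_apply, gradient_coord, gradient_coord,
    gradient_coord, fderiv_fun_mul hf hg]
  simp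

lemma gradient_exp (f : EuclideanSpace ℝ (Fin d) → ℝ)
    (x : EuclideanSpace ℝ (Fin d)) (hf : DifferentiableAt ℝ f x) :
    gradient (fun y => Real.exp (f y)) x = Real.exp (f x) • gradient f x := by
  ext i
  rw [PiLp.smul_apply, gradient_coord, gradient_coord, fderiv_exp hf]
  simp

lemma vdiv_add (X Y : EuclideanSpace ℝ (Fin d) → EuclideanSpace ℝ (Fin d))
    (x : EuclideanSpace ℝ (Fin d)) (hX : DifferentiableAt ℝ X x)
    (hY : DifferentiableAt ℝ Y x) :
    vdiv (fun y => X y + Y y) x = vdiv X x + vdiv Y x := by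
  unfold vdiv
  rw [fderiv_fun_add hX hY, ← Finset.sum_add_distrib]
  simp

lemma vdiv_const_smul (r : ℝ) (X : EuclideanSpace ℝ (Fin d) → EuclideanSpace ℝ (Fin d))
    (x : EuclideanSpace ℝ (Fin d)) (hX : DifferentiableAt ℝ X x) :
    vdiv (fun y => r • X y) x = r * vdiv X x := by
  unfold vdiv
  rw [fderiv_fun_const_smul hX r, Finset.mul_sum]
  simp

lemma vdiv_smul (a : EuclideanSpace ℝ (Fin d) → ℝ)
    (X : EuclideanSpace ℝ (Fin d) → EuclideanSpace ℝ (Fin d))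
    (x : EuclideanSpace ℝ (Fin d)) (ha : DifferentiableAt ℝ a x)
    (hX : DifferentiableAt ℝ X x) :
    vdiv (fun y => a y • X y) x = ⟪gradient a x, X x⟫ + a x * vdiv X x := by
  unfold vdiv
  rw [fderiv_fun_smul ha hX, inner_eq_sum, Finset.mul_sum, ← Finset.sum_add_distrib]
  congr 1; ext i
  rw [gradient_coord]
  simp [mul_comm, ContinuousLinearMap.smulRight_apply]
  ring

lemma gradient_differentiable (f : EuclideanSpace ℝ (Fin d) → ℝ) (hf : ContDiff ℝ 2 f) :
    Differentiable ℝ (gradient f) := by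
  have h1 : ContDiff ℝ 1 (fderiv ℝ f) := hf.fderiv_right (by norm_num)
  have h2 : Differentiable ℝ (fderiv ℝ f) := h1.differentiable one_ne_zero
  have key : gradient f = fun x => (EuclideanSpace.equiv (Fin d) ℝ).symm
      (fun i => fderiv ℝ f x (EuclideanSpace.single i 1)) := by
    funext x; ext i
    rw [gradient_coord]
    rfl
  rw [key]
  apply Differentiable.comp
  · exact (EuclideanSpace.equiv (Fin d) ℝ).symm.differentiable
  · rw [differentiable_pi]
    intro i
    exact h2.clm_apply (differentiable_const _)


/-- If `v∞` solves the stationary HJB equation and `p∞` solves the stationary Fokker–Planck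
equation, then `g∞ = p∞/f∞`, with `f∞ = exp(−(v∞ + Rν)/(σ²R))`, is an eigenfunction of the
Schrödinger operator `H e = (V/(σ²R))e − (σ²/2)Δe` with eigenvalue `c/(σ²R)`. -/
theorem stationary_g_is_eigenfunction
    (d : ℕ) (σ R : ℝ) (hσ : 0 < σ) (hR : 0 < R)
    (ν q : EuclideanSpace ℝ (Fin d) → ℝ) (hν : ContDiff ℝ (⊤ : ℕ∞) ν) (hq : ContDiff ℝ (⊤ : ℕ∞) q)
    (c : ℝ) (vinf pinf : EuclideanSpace ℝ (Fin d) → ℝ)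
    (hvinf : ContDiff ℝ 2 vinf) (hpinf : ContDiff ℝ 2 pinf)
    (hHJB : ∀ x,
      q x - c - ‖gradient vinf x‖ ^ 2 / (2 * R)
        - ⟪gradient vinf x, gradient ν x⟫ + σ ^ 2 / 2 * lap vinf x = 0)
    (hFP : ∀ x,
      vdiv (fun y => pinf y • (gradient ν y + R⁻¹ • gradient vinf y)) x
        + σ ^ 2 / 2 * lap pinf x = 0)
    (V : EuclideanSpace ℝ (Fin d) → ℝ)
    (hV : ∀ x, V x = q x + R / 2 * ‖gradient ν x‖ ^ 2 - σ ^ 2 * R / 2 * lap ν x)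
    (finf ginf : EuclideanSpace ℝ (Fin d) → ℝ)
    (hf : ∀ x, finf x = Real.exp (-(vinf x + R * ν x) / (σ ^ 2 * R)))
    (hg : ∀ x, ginf x = pinf x / finf x) :
    ∀ x, V x / (σ ^ 2 * R) * ginf x - σ ^ 2 / 2 * lap ginf x = c / (σ ^ 2 * R) * ginf x := by
  intro x
  have hσ' : σ ≠ 0 := ne_of_gt hσ
  have hR' : R ≠ 0 := ne_of_gt hR
  set κ : ℝ := (σ ^ 2 * R)⁻¹ with hκ
  set φ : EuclideanSpace ℝ (Fin d) → ℝ := fun y => κ * vinf y + (κ * R) * ν y with hφdef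
  have hν2 : ContDiff ℝ 2 ν := hν.of_le (WithTop.coe_le_coe.mpr (le_top : ((2 : ℕ∞)) ≤ ⊤))
  have hφ : ContDiff ℝ 2 φ := (contDiff_const.mul hvinf).add (contDiff_const.mul hν2)
  have hvd : Differentiable ℝ vinf := hvinf.differentiable two_ne_zero
  have hνd : Differentiable ℝ ν := hν2.differentiable two_ne_zero
  have hpd : Differentiable ℝ pinf := hpinf.differentiable two_ne_zero
  have hφd : Differentiable ℝ φ := hφ.differentiable two_ne_zero
  have hgv : Differentiable ℝ (gradient vinf) := gradient_differentiable _ hvinf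
  have hgν : Differentiable ℝ (gradient ν) := gradient_differentiable _ hν2
  have hgp : Differentiable ℝ (gradient pinf) := gradient_differentiable _ hpinf
  have hgφ : Differentiable ℝ (gradient φ) := gradient_differentiable _ hφ
  -- ginf = pinf * exp φ
  have hg' : ginf = fun y => pinf y * Real.exp (φ y) := by
    funext y
    rw [hg, hf]
    have : -(vinf y + R * ν y) / (σ ^ 2 * R) = -(φ y) := by
      rw [hφdef, hκ]; field_simp
    rw [this, Real.exp_neg]
    field_simp
  -- gradient of φ
  have hgradφ : ∀ y, gradient φ y = κ • gradient vinf y + (κ * R) • gradient ν y := by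
    intro y
    rw [hφdef]
    exact gradient_comb κ (κ * R) vinf ν y (hvd y) (hνd y)
  -- laplacian of φ
  have hlapφ : lap φ x = κ * lap vinf x + (κ * R) * lap ν x := by
    show vdiv (gradient φ) x = _
    have h1 : gradient φ = fun y => (fun z => κ • gradient vinf z) y
        + (fun z => (κ * R) • gradient ν z) y := funext hgradφ
    rw [h1, vdiv_add (fun z => κ • gradient vinf z) (fun z => (κ * R) • gradient ν z) x ((hgv x).const_smul κ) ((hgν x).const_smul (κ * R)),
      vdiv_const_smul κ _ x (hgv x), vdiv_const_smul (κ * R) _ x (hgν x)]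
    rfl
  -- norm of gradient φ
  have hnormφ : ‖gradient φ x‖ ^ 2
      = κ ^ 2 * (‖gradient vinf x‖ ^ 2 + 2 * R * ⟪gradient vinf x, gradient ν x⟫
        + R ^ 2 * ‖gradient ν x‖ ^ 2) := by
    rw [hgradφ x]
    have h2 : κ • gradient vinf x + (κ * R) • gradient ν x
        = κ • (gradient vinf x + R • gradient ν x) := by
      rw [smul_add, smul_smul]
    rw [h2, norm_smul, mul_pow, Real.norm_eq_abs, sq_abs,
      norm_add_sq_real, real_inner_smul_right, norm_smul, mul_pow, Real.norm_eq_abs, sq_abs]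
    ring
  -- the gradient of ginf
  have hgradg : gradient ginf = fun y =>
      Real.exp (φ y) • (pinf y • gradient φ y + gradient pinf y) := by
    funext y
    rw [hg', gradient_mul pinf (fun z => Real.exp (φ z)) y (hpd y) ((hφd y).exp),
      gradient_exp φ y (hφd y), smul_add, smul_smul, smul_smul, mul_comm (pinf y)]
  -- Fokker–Planck rewritten
  have hWd : DifferentiableAt ℝ (fun y => pinf y • gradient φ y) x := (hpd x).smul (hgφ x)
  have hdivpφ : vdiv (fun y => pinf y • gradient φ y) x
      = ⟪gradient pinf x, gradient φ x⟫ + pinf x * lap φ x := by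
    rw [vdiv_smul pinf _ x (hpd x) (hgφ x)]; rfl
  have hfield : (fun y => pinf y • (gradient ν y + R⁻¹ • gradient vinf y))
      = fun y => (σ ^ 2) • (pinf y • gradient φ y) := by
    funext y
    rw [hgradφ y]
    ext i
    simp only [PiLp.smul_apply, PiLp.add_apply, smul_eq_mul, hκ]
    field_simp
    ring
  have hFP' : σ ^ 2 * (⟪gradient pinf x, gradient φ x⟫ + pinf x * lap φ x)
      + σ ^ 2 / 2 * lap pinf x = 0 := by
    have := hFP x
    rw [hfield, vdiv_const_smul (σ ^ 2) _ x hWd, hdivpφ] at this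
    exact this
  have hAB : ⟪gradient pinf x, gradient φ x⟫ + pinf x * lap φ x
      = -(lap pinf x) / 2 := by
    have hσ2 : (σ : ℝ) ^ 2 ≠ 0 := pow_ne_zero 2 hσ'
    have h2 : σ ^ 2 * ((⟪gradient pinf x, gradient φ x⟫ + pinf x * lap φ x)
        - (-(lap pinf x) / 2)) = 0 := by linear_combination hFP'
    rcases mul_eq_zero.mp h2 with h | h
    · exact absurd h hσ2
    · linarith
  -- laplacian of ginf
  have hlapg : lap ginf x = ginf x * (‖gradient φ x‖ ^ 2 - lap φ x) := by
    have h3 : lap ginf x = vdiv (fun y =>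
        Real.exp (φ y) • (pinf y • gradient φ y + gradient pinf y)) x := by
      show vdiv (gradient ginf) x = _
      rw [hgradg]
    rw [h3, vdiv_smul _ (fun y => pinf y • gradient φ y + gradient pinf y) x ((hφd x).exp) (hWd.add (hgp x)),
      gradient_exp φ x (hφd x),
      vdiv_add _ (gradient pinf) x hWd (hgp x), hdivpφ,
      real_inner_smul_left, inner_add_right, real_inner_smul_right,
      real_inner_self_eq_norm_sq]
    have h4 : vdiv (gradient pinf) x = lap pinf x := rfl
    have hgx : ginf x = pinf x * Real.exp (φ x) := by rw [hg']
    rw [h4, hgx]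
    have h5 : ⟪gradient φ x, gradient pinf x⟫ = ⟪gradient pinf x, gradient φ x⟫ :=
      real_inner_comm _ _
    rw [h5]
    linear_combination 2 * Real.exp (φ x) * hAB
  -- final key scalar identity
  have key : V x / (σ ^ 2 * R) - σ ^ 2 / 2 * (‖gradient φ x‖ ^ 2 - lap φ x)
      = c / (σ ^ 2 * R) := by
    have hHJBx := hHJB x
    set I : ℝ := ⟪gradient vinf x, gradient ν x⟫ with hI
    rw [hV, hnormφ, hlapφ, hκ]
    field_simp
    field_simp at hHJBx
    linear_combination hHJBx
  rw [hlapg]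
  linear_combination ginf x * key
end
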